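/- Let g ≥ 1 and let ψ : ⋀⁴H → ⋀⁴H be the unique ℚ-linear map such that for all x₁,x₂,x₃,x₄ ∈ H: ψ(x₁∧x₂∧x₃∧x₄) = (x₁∧x₂ − (⟨x₁,x₂⟩/g)θ)∧(x₃∧x₄ − (⟨x₃,x₄⟩/g)θ) − (x₁∧x₃ − (⟨x₁,x₃⟩/g)θ)∧(x₂∧x₄ − (⟨x₂,x₄⟩/g)θ) + (x₁∧x₄ − (⟨x₁,x₄⟩/g)θ)∧(x₂∧x₃ − (⟨x₂,x₃⟩/g)θ); such a linear map exists and is unique because the right-hand side is alternating multilinear in (x₁,x₂,x₃,x₄). Then: (i) ψ(θ∧θ) = ((2g+1)/g)·θ∧θ; (ii) if g ≥ 3, then ψ(a₁∧a₂∧θ) = ((2g+2)/g)·a₁∧a₂∧θ; and (iii) if g ≥ 4, then ψ(a₁∧a₂∧a₃∧a₄) = 3·a₁∧a₂∧a₃∧a₄. (These are the evaluations of the composite cup∘φ on highest weight vectors of the three irreducible components of ⋀⁴H, showing cup∘φ acts on the components with highest weights λ₄, λ₂, 0 by the scalars 3, (2g+2)/g, (2g+1)/g respectively.) -/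
import Mathlib


noncomputable section

/-- `H = ℚ^{2g}`, where `Sum.inl i` indexes the basis vector `aᵢ` and `Sum.inr i`
indexes the basis vector `bᵢ`. -/
abbrev H (g : ℕ) : Type := (Fin g ⊕ Fin g) → ℚ

/-- The basis vector `aᵢ` of `H`. -/
def aa (g : ℕ) (i : Fin g) : H g := Pi.single (Sum.inl i) 1

/-- The basis vector `bᵢ` of `H`. -/
def bb (g : ℕ) (i : Fin g) : H g := Pi.single (Sum.inr i) 1

/-- The standard symplectic form on `H`, with `⟨aᵢ,aⱼ⟩ = ⟨bᵢ,bⱼ⟩ = 0` and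
`⟨aᵢ,bⱼ⟩ = δᵢⱼ = -⟨bⱼ,aᵢ⟩`. -/
def symp (g : ℕ) (x y : H g) : ℚ :=
  ∑ i : Fin g, (x (Sum.inl i) * y (Sum.inr i) - x (Sum.inr i) * y (Sum.inl i))

/-- The canonical inclusion `H → ⋀H` into the exterior algebra. -/
abbrev ιE (g : ℕ) : H g →ₗ[ℚ] ExteriorAlgebra ℚ (H g) := ExteriorAlgebra.ι ℚ

/-- `θ = Σᵢ aᵢ ∧ bᵢ ∈ ⋀²H`. -/
def θE (g : ℕ) : ExteriorAlgebra ℚ (H g) :=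
  ∑ i : Fin g, ιE g (aa g i) * ιE g (bb g i)

/-- The projection `u ∧ v ↦ u ∧ v − (⟨u,v⟩/g)·θ` of a decomposable `2`-vector onto the
primitive part `Λ²₀H`. -/
def prim (g : ℕ) (u v : H g) : ExteriorAlgebra ℚ (H g) :=
  ιE g u * ιE g v - (symp g u v / (g : ℚ)) • θE g

lemma symp_aa_aa (g : ℕ) (i j : Fin g) : symp g (aa g i) (aa g j) = 0 := by
  simp [symp, aa, Pi.single_apply]

lemma symp_bb_bb (g : ℕ) (i j : Fin g) : symp g (bb g i) (bb g j) = 0 := by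
  simp [symp, bb, Pi.single_apply]

lemma symp_aa_bb (g : ℕ) (i j : Fin g) : symp g (aa g i) (bb g j) = if i = j then 1 else 0 := by
  simp [symp, aa, bb, Pi.single_apply, eq_comm]

lemma symp_bb_aa (g : ℕ) (i j : Fin g) : symp g (bb g i) (aa g j) = -if i = j then 1 else 0 := by
  simp [symp, aa, bb, Pi.single_apply, eq_comm]

lemma ianti (g : ℕ) (x y : H g) : ιE g x * ιE g y = -(ιE g y * ιE g x) := by
  have h := ExteriorAlgebra.ι_add_mul_swap (R := ℚ) x y
  rw [eq_neg_iff_add_eq_zero]; exact h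

lemma mul4_swap23 {R : Type*} [Ring R] (a b c d : R) (h : b * c = -(c * b)) :
    a * b * (c * d) = -(a * c * (b * d)) := by
  calc a * b * (c * d) = a * (b * c) * d := by noncomm_ring
    _ = a * (-(c * b)) * d := by rw [h]
    _ = -(a * c * (b * d)) := by noncomm_ring

lemma mul4_comm {R : Type*} [Ring R] (a b c d : R)
    (hac : a * c = -(c * a)) (had : a * d = -(d * a))
    (hbc : b * c = -(c * b)) (hbd : b * d = -(d * b)) :
    a * b * (c * d) = c * d * (a * b) := by
  calc a * b * (c * d) = a * (b * c) * d := by noncomm_ring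
    _ = a * (-(c * b)) * d := by rw [hbc]
    _ = -((a * c) * (b * d)) := by noncomm_ring
    _ = -((-(c * a)) * (b * d)) := by rw [hac]
    _ = c * (a * (b * d)) := by noncomm_ring
    _ = c * (a * (-(d * b))) := by rw [hbd]
    _ = -(c * ((a * d) * b)) := by noncomm_ring
    _ = -(c * ((-(d * a)) * b)) := by rw [had]
    _ = c * d * (a * b) := by noncomm_ring

lemma theta_comm (g : ℕ) (u v : H g) :
    θE g * (ιE g u * ιE g v) = ιE g u * ιE g v * θE g := by
  rw [θE, Finset.sum_mul, Finset.mul_sum]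
  exact Finset.sum_congr rfl fun i _ =>
    mul4_comm _ _ _ _ (ianti g _ _) (ianti g _ _) (ianti g _ _) (ianti g _ _)


set_option maxHeartbeats 1600000 in
/-- Let `ψ : ⋀⁴H → ⋀⁴H` be the unique linear map with
`ψ(x₁∧x₂∧x₃∧x₄) = p(x₁∧x₂)∧p(x₃∧x₄) − p(x₁∧x₃)∧p(x₂∧x₄) + p(x₁∧x₄)∧p(x₂∧x₃)`,
where `p(u∧v) = u∧v − (⟨u,v⟩/g)θ`.  Then `ψ(θ∧θ) = ((2g+1)/g)·θ∧θ`; if `g ≥ 3` then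
`ψ(a₁∧a₂∧θ) = ((2g+2)/g)·a₁∧a₂∧θ`; and if `g ≥ 4` then
`ψ(a₁∧a₂∧a₃∧a₄) = 3·a₁∧a₂∧a₃∧a₄`.  (These are the eigenvalues of `cup ∘ φ` on the
three irreducible components of `⋀⁴H`, of highest weights `0`, `λ₂`, `λ₄`.) -/
theorem cup_phi_eigenvalues (g : ℕ) (hg : 1 ≤ g)
    (ψ : ExteriorAlgebra ℚ (H g) →ₗ[ℚ] ExteriorAlgebra ℚ (H g))
    (hψ : ∀ x₁ x₂ x₃ x₄ : H g,
      ψ (ιE g x₁ * ιE g x₂ * ιE g x₃ * ιE g x₄) =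
        prim g x₁ x₂ * prim g x₃ x₄ - prim g x₁ x₃ * prim g x₂ x₄
          + prim g x₁ x₄ * prim g x₂ x₃) :
    ψ (θE g * θE g) = ((2 * (g : ℚ) + 1) / (g : ℚ)) • (θE g * θE g) ∧
    (∀ h3 : 3 ≤ g,
      ψ (ιE g (aa g ⟨0, by omega⟩) * ιE g (aa g ⟨1, by omega⟩) * θE g) =
        ((2 * (g : ℚ) + 2) / (g : ℚ)) •
          (ιE g (aa g ⟨0, by omega⟩) * ιE g (aa g ⟨1, by omega⟩) * θE g)) ∧
    (∀ h4 : 4 ≤ g,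
      ψ (ιE g (aa g ⟨0, by omega⟩) * ιE g (aa g ⟨1, by omega⟩) *
          ιE g (aa g ⟨2, by omega⟩) * ιE g (aa g ⟨3, by omega⟩)) =
        (3 : ℚ) •
          (ιE g (aa g ⟨0, by omega⟩) * ιE g (aa g ⟨1, by omega⟩) *
            ιE g (aa g ⟨2, by omega⟩) * ιE g (aa g ⟨3, by omega⟩))) := by
  
  refine ⟨?_, fun h3 => ?_, fun h4 => ?_⟩
  · have hgQ : (g : ℚ) ≠ 0 := Nat.cast_ne_zero.mpr (by omega)
    have hθ : ∑ i : Fin g, ιE g (aa g i) * ιE g (bb g i) = θE g := rfl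
    have hexp : ψ (θE g * θE g) = ∑ i : Fin g, ∑ j : Fin g,
        (prim g (aa g i) (bb g i) * prim g (aa g j) (bb g j)
          - prim g (aa g i) (aa g j) * prim g (bb g i) (bb g j)
          + prim g (aa g i) (bb g j) * prim g (bb g i) (aa g j)) := by
      rw [show θE g * θE g = ∑ i : Fin g, ∑ j : Fin g,
          ιE g (aa g i) * ιE g (bb g i) * (ιE g (aa g j) * ιE g (bb g j)) from
        Finset.sum_mul_sum _ _ _ _, map_sum]
      refine Finset.sum_congr rfl fun i _ => ?_
      rw [map_sum]
      refine Finset.sum_congr rfl fun j _ => ?_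
      rw [← mul_assoc]
      exact hψ _ _ _ _
    have hP : ∑ i : Fin g, prim g (aa g i) (bb g i) = 0 := by
      have h1 : ∀ i : Fin g, prim g (aa g i) (bb g i)
          = ιE g (aa g i) * ιE g (bb g i) - ((1:ℚ)/(g:ℚ)) • θE g := by
        intro i; simp [prim, symp_aa_bb]
      simp only [h1]
      rw [Finset.sum_sub_distrib, hθ, ← Finset.sum_smul]
      simp only [Finset.sum_const, Finset.card_univ, Fintype.card_fin, nsmul_eq_mul]
      rw [mul_one_div, div_self hgQ, one_smul, sub_self]
    have hS2 : ∀ i j : Fin g, prim g (aa g i) (aa g j) * prim g (bb g i) (bb g j)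
        = -(ιE g (aa g i) * ιE g (bb g i) * (ιE g (aa g j) * ιE g (bb g j))) := by
      intro i j
      simp only [prim, symp_aa_aa, symp_bb_bb, zero_div, zero_smul, sub_zero]
      exact mul4_swap23 _ _ _ _ (ianti g (aa g j) (bb g i))
    have hS3 : ∀ i j : Fin g, prim g (aa g i) (bb g j) * prim g (bb g i) (aa g j)
        = ιE g (aa g i) * ιE g (bb g i) * (ιE g (aa g j) * ιE g (bb g j))
          + (if i = j then (((2:ℚ)/(g:ℚ)) • (ιE g (aa g i) * ιE g (bb g i) * θE g)
              - ((1:ℚ)/((g:ℚ)*(g:ℚ))) • (θE g * θE g)) else 0) := by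
      intro i j
      by_cases h : i = j
      · subst h
        simp only [prim, symp_aa_bb, symp_bb_aa, eq_self_iff_true, if_true, if_pos rfl]
        set A := ιE g (aa g i) with hA
        set B := ιE g (bb g i) with hB
        have hAA : A * A = 0 := ExteriorAlgebra.ι_sq_zero _
        have hBB : B * B = 0 := ExteriorAlgebra.ι_sq_zero _
        have e1 : A * B * (A * B) = 0 := by
          rw [mul4_swap23 A B A B (ianti g (bb g i) (aa g i)), hAA]
          noncomm_ring
        have e2 : A * B * (B * A) = 0 := by
          rw [show A * B * (B * A) = A * (B * B) * A by noncomm_ring, hBB]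
          noncomm_ring
        have h1 : A * B * (B * A) = A * B * (A * B) := by rw [e1, e2]
        have h2 : θE g * (B * A) = -(A * B * θE g) := by
          rw [theta_comm g (bb g i) (aa g i), ← hA, ← hB,
            ianti g (bb g i) (aa g i), ← hA, ← hB, neg_mul]
        simp only [sub_mul, mul_sub, smul_mul_assoc, mul_smul_comm, smul_smul]
        rw [h1, h2]
        match_scalars <;> field_simp <;> ring
      · simp only [prim, symp_aa_bb, symp_bb_aa, if_neg h, zero_div, neg_zero, zero_smul,
          sub_zero, add_zero]
        rw [mul4_swap23 _ _ _ _ (ianti g (bb g j) (bb g i)),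
          ianti g (bb g j) (aa g j), mul_neg, neg_neg]
    rw [hexp]
    simp only [hS2, hS3, sub_neg_eq_add]
    simp only [Finset.sum_add_distrib]
    have e1 : (∑ i : Fin g, ∑ j : Fin g,
        prim g (aa g i) (bb g i) * prim g (aa g j) (bb g j)) = 0 := by
      rw [← Finset.sum_mul_sum, hP, zero_mul]
    have e2 : (∑ i : Fin g, ∑ j : Fin g,
        ιE g (aa g i) * ιE g (bb g i) * (ιE g (aa g j) * ιE g (bb g j)))
        = θE g * θE g := by
      rw [← Finset.sum_mul_sum, hθ]
    rw [e1, e2]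
    simp only [Finset.sum_ite_eq, Finset.mem_univ, if_true]
    rw [Finset.sum_sub_distrib, ← Finset.smul_sum, ← Finset.sum_mul, hθ, ← Finset.sum_smul]
    simp only [Finset.sum_const, Finset.card_univ, Fintype.card_fin, nsmul_eq_mul]
    match_scalars <;> field_simp <;> ring
  · have hgQ : (g : ℚ) ≠ 0 := Nat.cast_ne_zero.mpr (by omega)
    set i0 : Fin g := ⟨0, by omega⟩ with hi0
    set i1 : Fin g := ⟨1, by omega⟩ with hi1
    have hne : i0 ≠ i1 := by simp [hi0, hi1, Fin.ext_iff]
    set u := ιE g (aa g i0) with hu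
    set v := ιE g (aa g i1) with hv
    set X := u * v * θE g with hX
    have hexp : ψ (u * v * θE g) = ∑ i : Fin g,
        (prim g (aa g i0) (aa g i1) * prim g (aa g i) (bb g i)
          - prim g (aa g i0) (aa g i) * prim g (aa g i1) (bb g i)
          + prim g (aa g i0) (bb g i) * prim g (aa g i1) (aa g i)) := by
      rw [θE, Finset.mul_sum, map_sum]
      exact Finset.sum_congr rfl fun i _ => by rw [← mul_assoc]; exact hψ _ _ _ _
    have hterm : ∀ i : Fin g,
        prim g (aa g i0) (aa g i1) * prim g (aa g i) (bb g i)
          - prim g (aa g i0) (aa g i) * prim g (aa g i1) (bb g i)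
          + prim g (aa g i0) (bb g i) * prim g (aa g i1) (aa g i)
        = (3:ℚ) • (u * v * (ιE g (aa g i) * ιE g (bb g i))) - ((1:ℚ)/(g:ℚ)) • X
          + ((if i1 = i then ((1:ℚ)/(g:ℚ)) • X else 0)
          + (if i0 = i then ((1:ℚ)/(g:ℚ)) • X else 0)) := by
      intro i
      by_cases h1 : i1 = i
      · subst h1
        simp only [prim, symp_aa_aa, symp_aa_bb, symp_bb_aa, zero_div, zero_smul, sub_zero, eq_self_iff_true, if_true,
          if_pos rfl, if_neg hne, ← hu, ← hv]
        have hvv : v * v = 0 := ExteriorAlgebra.ι_sq_zero _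
        have h0 : u * v * (v * ιE g (bb g i1)) = 0 := by
          rw [show u * v * (v * ιE g (bb g i1)) = u * (v * v) * ιE g (bb g i1) by noncomm_ring,
            hvv]
          noncomm_ring
        rw [sub_self, hvv, mul_zero, h0]
        simp
      · by_cases h0 : i0 = i
        · subst h0
          have hne' : ¬ (i1 = i0) := fun h => hne h.symm
          simp only [prim, symp_aa_aa, symp_aa_bb, symp_bb_aa, zero_div, zero_smul, sub_zero, eq_self_iff_true, if_true,
            if_pos rfl, if_neg hne, if_neg hne', ← hu, ← hv]
          set B := ιE g (bb g i0) with hB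
          have huu : u * u = 0 := ExteriorAlgebra.ι_sq_zero _
          have hz : u * v * (u * B) = 0 := by
            rw [mul4_swap23 u v u B (ianti g (aa g i1) (aa g i0)), huu]
            noncomm_ring
          have hz2 : u * B * (v * u) = 0 := by
            rw [mul4_swap23 u B v u (ianti g (bb g i0) (aa g i1)),
              ianti g (bb g i0) (aa g i0), ← hB, ← hu, mul_neg, neg_neg, hz]
          have hθc : θE g * (v * u) = -X := by
            rw [theta_comm g (aa g i1) (aa g i0), ← hu, ← hv,
              ianti g (aa g i1) (aa g i0), ← hu, ← hv, neg_mul, hX, mul_assoc]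
          rw [mul_sub, mul_smul_comm, sub_mul, smul_mul_assoc, hz, hz2, huu, hθc, zero_mul]
          simp only [smul_zero, smul_neg]
          module
        · have h1' : ¬ (i1 = i) := h1
          simp only [prim, symp_aa_aa, symp_aa_bb, symp_bb_aa, zero_div, zero_smul, sub_zero, eq_self_iff_true, if_true,
            if_pos rfl, if_neg h0, if_neg h1', ← hu, ← hv]
          set A := ιE g (aa g i) with hA
          set B := ιE g (bb g i) with hB
          rw [mul_sub, mul_smul_comm,
            mul4_swap23 u A v B (ianti g (aa g i) (aa g i1)),
            mul4_swap23 u B v A (ianti g (bb g i) (aa g i1)),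
            ianti g (bb g i) (aa g i), ← hA, ← hB, mul_neg, neg_neg]
          module
    rw [hexp]
    simp only [hterm]
    simp only [Finset.sum_add_distrib, Finset.sum_sub_distrib]
    rw [← Finset.smul_sum, ← Finset.mul_sum]
    have hθ : ∑ i : Fin g, ιE g (aa g i) * ιE g (bb g i) = θE g := rfl
    rw [hθ, ← Finset.sum_smul]
    simp only [Finset.sum_ite_eq, Finset.mem_univ, if_true, Finset.sum_const,
      Finset.card_univ, Fintype.card_fin, nsmul_eq_mul]
    rw [← hX]
    match_scalars
    field_simp
    ring
  · rw [hψ]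
    simp only [prim, symp_aa_aa, zero_div, zero_smul, sub_zero]
    set u0 := ιE g (aa g ⟨0, by omega⟩)
    set u1 := ιE g (aa g ⟨1, by omega⟩)
    set u2 := ιE g (aa g ⟨2, by omega⟩)
    set u3 := ιE g (aa g ⟨3, by omega⟩)
    rw [mul4_swap23 u0 u2 u1 u3 (ianti g _ _), mul4_swap23 u0 u3 u1 u2 (ianti g _ _),
      ianti g (aa g ⟨3, by omega⟩) (aa g ⟨2, by omega⟩)]
    show u0 * u1 * (u2 * u3) - -(u0 * u1 * (u2 * u3)) + -(u0 * u1 * -(u2 * u3)) = _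
    rw [mul_neg, neg_neg, ← mul_assoc]
    module
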